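/- arXiv:1004.1618 — 2 statements merged into one kernel-verified Lean document; each statement's English description precedes it below -/
import Mathlib

section
/- Let B : (T,∞) → ℝ^{n×n} be a bounded measurable matrix-valued function (not necessarily continuous), and let φ : (T,∞) → ℝⁿ be a solution of the linear system dφ/dt = B(t)φ (so φ is Lipschitz continuous and satisfies the equation almost everywhere). Then for all t ≥ s > T, |φ(t)| ≤ |φ(s)| exp( ∫_s^t μ(B(τ)) dτ ), where μ(B) denotes the largest eigenvalue of the symmetric part (B + Bᵗ)/2. -/
open MeasureTheory Set Filter
open scoped Topology

noncomputable section

/-- The Euclidean norm of a vector `v : Fin n → ℝ`. -/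
def euclNorm {n : ℕ} (v : Fin n → ℝ) : ℝ := Real.sqrt (∑ i, v i ^ 2)

/-- `μ(B)`: the largest eigenvalue of the symmetric part `(B + Bᵗ)/2` of `B`. -/
def mu {n : ℕ} (B : Matrix (Fin n) (Fin n) ℝ) : ℝ :=
  sSup {c : ℝ | Module.End.HasEigenvalue
    (Matrix.toLin' (((2 : ℝ)⁻¹) • (B + B.transpose))) c}

/-- A solution of `dφ/dt = B(t)φ` on `(T,∞)` for bounded measurable `B`:
a Lipschitz function satisfying the equation almost everywhere. -/
def IsAESol (n : ℕ) (T : ℝ) (B : ℝ → Matrix (Fin n) (Fin n) ℝ)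
    (φ : ℝ → Fin n → ℝ) : Prop :=
  (∃ L : NNReal, LipschitzOnWith L φ (Ioi T)) ∧
    ∀ᵐ t ∂(volume.restrict (Ioi T)), HasDerivAt φ ((B t).mulVec (φ t)) t

/-! The squared norm `g = |φ|²` is absolutely continuous with `g' = 2 ⟨φ, Bφ⟩ ≤ 2 μ(B) g` almost
everywhere, because `μ(B)` is the maximum of `⟨x, Bx⟩` on the unit sphere. Hence
`g · exp (-2 ∫ μ(B))` is absolutely continuous with nonpositive derivative almost everywhere, so
it is nonincreasing by the fundamental theorem of calculus for absolutely continuous functions.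
Integrability of `μ(B(·))` comes from the continuity of `μ`, a supremum over a compact sphere. -/

open Matrix Metric Module.End
open scoped RealInnerProductSpace

theorem LipschitzOnWith.comp_absolutelyContinuousOnInterval {X Y : Type*} [PseudoMetricSpace X]
    [PseudoMetricSpace Y] {F : X → Y} {K : NNReal} {s : Set X} {f : ℝ → X} {a b : ℝ}
    (hF : LipschitzOnWith K F s) (hf : AbsolutelyContinuousOnInterval f a b)
    (hfs : MapsTo f (uIcc a b) s) : AbsolutelyContinuousOnInterval (F ∘ f) a b := by
  refine squeeze_zero' (Eventually.of_forall fun _ => Finset.sum_nonneg fun _ _ => dist_nonneg)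
    ?_ (by simpa using Tendsto.const_mul (K : ℝ) hf)
  filter_upwards [mem_inf_of_right (mem_principal_self _)] with E hE
  rw [Finset.mul_sum]
  exact Finset.sum_le_sum fun i hi =>
    hF.dist_le_mul _ (hfs (hE.1 i hi).1) _ (hfs (hE.1 i hi).2)

theorem ContDiff.comp_absolutelyContinuousOnInterval {E F : Type*} [NormedAddCommGroup E]
    [NormedSpace ℝ E] [FiniteDimensional ℝ E] [NormedAddCommGroup F] [NormedSpace ℝ F]
    {G : E → F} {f : ℝ → E} {a b : ℝ} (hG : ContDiff ℝ 1 G)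
    (hf : AbsolutelyContinuousOnInterval f a b) : AbsolutelyContinuousOnInterval (G ∘ f) a b := by
  obtain ⟨C, hC⟩ := hf.exists_bound
  obtain ⟨K, hK⟩ := hG.contDiffOn.exists_lipschitzOnWith one_ne_zero (convex_closedBall 0 C)
    (isCompact_closedBall 0 C)
  exact hK.comp_absolutelyContinuousOnInterval hf fun x hx => mem_closedBall_zero_iff.mpr (hC x hx)

namespace AbsolutelyContinuousOnInterval

variable {a b : ℝ}

theorem le_of_ae_deriv_nonpos {f : ℝ → ℝ} (hab : a ≤ b)
    (hf : AbsolutelyContinuousOnInterval f a b) (hf' : ∀ᵐ x, x ∈ Icc a b → deriv f x ≤ 0) :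
    f b ≤ f a := by
  rw [← sub_nonpos, ← hf.integral_deriv_eq_sub, intervalIntegral.integral_of_le hab]
  refine integral_nonpos_of_ae ?_
  rw [EventuallyLE, ae_restrict_iff' measurableSet_Ioc]
  filter_upwards [hf'] with x hx hxab using hx (Ioc_subset_Icc_self hxab)

theorem le_mul_exp_integral_of_ae_hasDerivAt_le {g m : ℝ → ℝ} (hab : a ≤ b)
    (hg : AbsolutelyContinuousOnInterval g a b) (hm : IntervalIntegrable m volume a b)
    (hg' : ∀ᵐ x, x ∈ Icc a b → ∃ d, HasDerivAt g d x ∧ d ≤ m x * g x) :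
    g b ≤ g a * Real.exp (∫ x in a..b, m x) := by
  set M : ℝ → ℝ := fun x => ∫ y in a..x, m y
  have hM : AbsolutelyContinuousOnInterval M a b :=
    hm.absolutelyContinuousOnInterval_intervalIntegral left_mem_uIcc
  have hE : AbsolutelyContinuousOnInterval (fun x => Real.exp (-M x)) a b :=
    (by fun_prop : ContDiff ℝ 1 fun y => Real.exp (-y)).comp_absolutelyContinuousOnInterval hM
  have key : g b * Real.exp (-M b) ≤ g a * Real.exp (-M a) := by
    refine (hg.fun_mul hE).le_of_ae_deriv_nonpos hab ?_
    filter_upwards [hg', hm.ae_hasDerivAt_integral] with x hgx hMx hx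
    obtain ⟨d, hd, hdm⟩ := hgx hx
    have hdx : HasDerivAt (fun y => g y * Real.exp (-M y))
        (d * Real.exp (-M x) + g x * (Real.exp (-M x) * -m x)) x :=
      hd.mul (hMx (Icc_subset_uIcc hx) a left_mem_uIcc).neg.exp
    rw [hdx.deriv]
    nlinarith [Real.exp_pos (-M x)]
  have hMa : M a = 0 := intervalIntegral.integral_same
  rw [hMa, neg_zero, Real.exp_zero, mul_one, Real.exp_neg, ← div_eq_mul_inv,
    div_le_iff₀ (Real.exp_pos _)] at key
  exact key

end AbsolutelyContinuousOnInterval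

section Rayleigh

variable {E : Type*} [NormedAddCommGroup E] [InnerProductSpace ℝ E] {T : E →ₗ[ℝ] E}

theorem Module.End.HasEigenvalue.mem_image_inner_sphere {c : ℝ} (h : HasEigenvalue T c) :
    c ∈ (fun x => ⟪T x, x⟫) '' sphere 0 1 := by
  obtain ⟨v, hv⟩ := h.exists_hasEigenvector
  have hv0 : ‖v‖ ≠ 0 := norm_ne_zero_iff.mpr hv.2
  refine ⟨‖v‖⁻¹ • v, by simp [norm_smul, hv.2], ?_⟩
  simp only [map_smul, hv.apply_eq_smul, real_inner_smul_left, real_inner_smul_right,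
    real_inner_self_eq_norm_sq]
  field_simp

variable [FiniteDimensional ℝ E]

theorem LinearMap.IsSymmetric.hasEigenvalue_of_isMaxOn_sphere (hT : T.IsSymmetric) {x₀ : E}
    (hx₀ : x₀ ∈ sphere (0 : E) 1) (hmax : IsMaxOn (fun x => ⟪T x, x⟫) (sphere 0 1) x₀) :
    HasEigenvalue T ⟪T x₀, x₀⟫ := by
  have hx₀' : ‖x₀‖ = 1 := by simpa using hx₀
  have hT' : IsSelfAdjoint (LinearMap.toContinuousLinearMap T) :=
    (LinearMap.isSelfAdjoint_toContinuousLinearMap_iff T).mpr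
      ((LinearMap.isSymmetric_iff_isSelfAdjoint T).mp hT)
  have hmax' : IsMaxOn (LinearMap.toContinuousLinearMap T).reApplyInnerSelf
      (sphere 0 ‖x₀‖) x₀ := by
    rw [hx₀']
    convert hmax using 1
    ext x
    simp [ContinuousLinearMap.reApplyInnerSelf_apply]
  have hev := hT'.hasEigenvector_of_isLocalExtrOn (by rintro rfl; simp at hx₀')
    (Or.inr hmax'.localize)
  simpa [hx₀', ContinuousLinearMap.reApplyInnerSelf_apply] using hasEigenvalue_of_hasEigenvector hev

/-- In the zero space both sides are `sSup ∅ = 0`. -/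
theorem LinearMap.IsSymmetric.sSup_hasEigenvalue_eq (hT : T.IsSymmetric) :
    sSup {c | HasEigenvalue T c} = sSup ((fun x => ⟪T x, x⟫) '' sphere 0 1) := by
  rcases (sphere (0 : E) 1).eq_empty_or_nonempty with h | h
  · have : {c | HasEigenvalue T c} = ∅ :=
      eq_empty_of_forall_notMem fun c hc => by simpa [h] using hc.mem_image_inner_sphere
    simp [h, this]
  have := FiniteDimensional.proper_real E
  have hq : Continuous fun x => ⟪T x, x⟫ := T.continuous_of_finiteDimensional.inner continuous_id
  obtain ⟨x₀, hx₀, hmax⟩ := (isCompact_sphere (0 : E) 1).exists_isMaxOn h hq.continuousOn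
  have hgreatest : IsGreatest ((fun x => ⟪T x, x⟫) '' sphere 0 1) ⟪T x₀, x₀⟫ :=
    ⟨mem_image_of_mem _ hx₀, forall_mem_image.2 hmax⟩
  rw [hgreatest.csSup_eq]
  exact IsGreatest.csSup_eq ⟨hT.hasEigenvalue_of_isMaxOn_sphere hx₀ hmax,
    fun c hc => hgreatest.2 hc.mem_image_inner_sphere⟩

theorem LinearMap.inner_apply_self_le_sSup_sphere_mul_norm_sq (T : E →ₗ[ℝ] E) (x : E) :
    ⟪T x, x⟫ ≤ sSup ((fun y => ⟪T y, y⟫) '' sphere 0 1) * ‖x‖ ^ 2 := by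
  rcases eq_or_ne x 0 with rfl | hx
  · simp
  have := FiniteDimensional.proper_real E
  have hq : Continuous fun x => ⟪T x, x⟫ := T.continuous_of_finiteDimensional.inner continuous_id
  have hle := le_csSup ((isCompact_sphere (0 : E) 1).image hq).bddAbove (mem_image_of_mem _
    (show ‖x‖⁻¹ • x ∈ sphere (0 : E) 1 by simp [norm_smul, hx]))
  simp only [map_smul, real_inner_smul_left, real_inner_smul_right, ← mul_assoc] at hle
  calc ⟪T x, x⟫ = ‖x‖⁻¹ * ‖x‖⁻¹ * ⟪T x, x⟫ * ‖x‖ ^ 2 := by field_simp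
    _ ≤ _ := by gcongr

end Rayleigh

section LogarithmicNorm

variable {n : ℕ}

theorem inner_toEuclideanLin_symmPart_apply_self (A : Matrix (Fin n) (Fin n) ℝ)
    (x : EuclideanSpace ℝ (Fin n)) :
    ⟪toEuclideanLin ((2 : ℝ)⁻¹ • (A + Aᵀ)) x, x⟫ = x.ofLp ⬝ᵥ (A *ᵥ x.ofLp) := by
  rw [EuclideanSpace.inner_eq_star_dotProduct]
  simp [toLpLin_apply, dotProduct_add, dotProduct_transpose_mulVec, ← two_mul]

theorem isSymmetric_toEuclideanLin_symmPart (A : Matrix (Fin n) (Fin n) ℝ) :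
    (toEuclideanLin ((2 : ℝ)⁻¹ • (A + Aᵀ))).IsSymmetric := by
  refine isSymmetric_toEuclideanLin_iff.mpr ?_
  ext i j
  simp [mul_add, add_comm]

theorem mu_eq_sSup_sphere (A : Matrix (Fin n) (Fin n) ℝ) :
    mu A = sSup ((fun x : EuclideanSpace ℝ (Fin n) => x.ofLp ⬝ᵥ (A *ᵥ x.ofLp)) '' sphere 0 1) := by
  have hev : {c | HasEigenvalue (toLin' ((2 : ℝ)⁻¹ • (A + Aᵀ))) c} =
      {c | HasEigenvalue (toEuclideanLin ((2 : ℝ)⁻¹ • (A + Aᵀ))) c} := by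
    ext c
    simp only [mem_ofPred_eq, hasEigenvalue_iff_mem_spectrum, spectrum_toLin', spectrum_toLpLin]
  rw [mu, hev, (isSymmetric_toEuclideanLin_symmPart A).sSup_hasEigenvalue_eq]
  simp_rw [inner_toEuclideanLin_symmPart_apply_self]

theorem dotProduct_mulVec_le_mu (A : Matrix (Fin n) (Fin n) ℝ) (x : Fin n → ℝ) :
    x ⬝ᵥ (A *ᵥ x) ≤ mu A * ∑ i, x i ^ 2 := by
  have h := (toEuclideanLin ((2 : ℝ)⁻¹ • (A + Aᵀ))).inner_apply_self_le_sSup_sphere_mul_norm_sq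
    (WithLp.toLp 2 x)
  simp_rw [inner_toEuclideanLin_symmPart_apply_self, ← mu_eq_sSup_sphere,
    EuclideanSpace.real_norm_sq_eq] at h
  exact h

theorem continuous_mu : Continuous (mu : Matrix (Fin n) (Fin n) ℝ → ℝ) := by
  simp_rw [funext mu_eq_sSup_sphere]
  exact (isCompact_sphere 0 1).continuous_sSup (by fun_prop)

theorem intervalIntegrable_mu_comp {B : ℝ → Matrix (Fin n) (Fin n) ℝ}
    (hB : ∀ i j, Measurable fun t => B t i j) {C a b : ℝ}
    (hC : ∀ t ∈ uIcc a b, ∀ i j, |B t i j| ≤ C) :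
    IntervalIntegrable (fun t => mu (B t)) volume a b := by
  -- Mathlib puts no measurable structure on matrices; use the product one.
  let _ : MeasurableSpace (Matrix (Fin n) (Fin n) ℝ) := MeasurableSpace.pi
  have _ : BorelSpace (Matrix (Fin n) (Fin n) ℝ) :=
    inferInstanceAs (BorelSpace (Fin n → Fin n → ℝ))
  have hmeas : Measurable fun t => mu (B t) := (continuous_mu (n := n)).measurable.comp
    (measurable_pi_lambda _ fun i => measurable_pi_lambda _ fun j => hB i j)
  obtain ⟨D, hD⟩ := (isCompact_univ_pi fun _ => isCompact_univ_pi fun _ => isCompact_Icc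
    (a := -C) (b := C)).exists_bound_of_continuousOn continuous_mu.continuousOn
  refine intervalIntegrable_iff.mpr (Measure.integrableOn_of_bounded measure_Ioc_lt_top.ne
    hmeas.aestronglyMeasurable (M := D) ?_)
  refine ae_restrict_of_forall_mem measurableSet_uIoc fun t ht => hD _ ?_
  exact fun i _ j _ => abs_le.mp (hC t (uIoc_subset_uIcc ht) i j)

end LogarithmicNorm

theorem HasDerivAt.sum_sq {ι : Type*} [Fintype ι] {f : ℝ → ι → ℝ} {f' : ι → ℝ} {t : ℝ}
    (hf : HasDerivAt f f' t) : HasDerivAt (fun τ => ∑ i, f τ i ^ 2) (2 * (f t ⬝ᵥ f')) t := by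
  refine (HasDerivAt.fun_sum fun i _ => ((hasDerivAt_pi.mp hf) i).fun_pow 2).congr_deriv ?_
  simp only [dotProduct, Finset.mul_sum]
  exact Finset.sum_congr rfl fun i _ => by ring

/-- **Wazewski-type inequality (Section 4).** If `B : (T,∞) → ℝ^{n×n}` is bounded and
measurable (not necessarily continuous) and `φ` is a (Lipschitz, a.e.) solution of
`dφ/dt = B(t)φ`, then `|φ(t)| ≤ |φ(s)| exp(∫_s^t μ(B(τ)) dτ)` for all `t ≥ s > T`,
where `μ(B)` is the largest eigenvalue of `(B + Bᵗ)/2`. -/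
theorem norm_le_exp_integral_mu
    (n : ℕ) (T : ℝ)
    (B : ℝ → Matrix (Fin n) (Fin n) ℝ)
    (hB_meas : ∀ i j, Measurable fun t => B t i j)
    (hB_bdd : ∃ C : ℝ, ∀ t ∈ Ioi T, ∀ i j, |B t i j| ≤ C)
    (φ : ℝ → Fin n → ℝ)
    (hφ : IsAESol n T B φ) :
    ∀ s t : ℝ, T < s → s ≤ t →
      euclNorm (φ t) ≤ euclNorm (φ s) * Real.exp (∫ τ in s..t, mu (B τ)) := by
  intro s t hTs hst
  obtain ⟨⟨L, hφ_lip⟩, hφ_deriv⟩ := hφ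
  obtain ⟨C, hC⟩ := hB_bdd
  have hsub : uIcc s t ⊆ Ioi T := by
    rw [uIcc_of_le hst]
    exact fun τ hτ => hTs.trans_le hτ.1
  have hg : AbsolutelyContinuousOnInterval (fun τ => ∑ i, φ τ i ^ 2) s t :=
    (by fun_prop : ContDiff ℝ 1 fun v : Fin n → ℝ => ∑ i, v i ^ 2)
      |>.comp_absolutelyContinuousOnInterval (hφ_lip.mono hsub).absolutelyContinuousOnInterval
  have hg' : ∀ᵐ τ, τ ∈ Icc s t → ∃ d, HasDerivAt (fun τ => ∑ i, φ τ i ^ 2) d τ ∧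
      d ≤ 2 * mu (B τ) * ∑ i, φ τ i ^ 2 := by
    filter_upwards [(ae_restrict_iff' measurableSet_Ioi).mp hφ_deriv] with τ hτ hτst
    refine ⟨_, (hτ (hsub (Icc_subset_uIcc hτst))).sum_sq, ?_⟩
    linarith [dotProduct_mulVec_le_mu (B τ) (φ τ)]
  have key := hg.le_mul_exp_integral_of_ae_hasDerivAt_le hst
    ((intervalIntegrable_mu_comp hB_meas fun τ hτ => hC τ (hsub hτ)).const_mul 2) hg'
  rw [intervalIntegral.integral_const_mul, mul_comm 2, Real.exp_mul, Real.rpow_two] at key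
  calc euclNorm (φ t) ≤ √((∑ i, φ s i ^ 2) * Real.exp (∫ τ in s..t, mu (B τ)) ^ 2) :=
        Real.sqrt_le_sqrt key
    _ = euclNorm (φ s) * Real.exp (∫ τ in s..t, mu (B τ)) := by
        rw [Real.sqrt_mul (Finset.sum_nonneg fun i _ => sq_nonneg _),
          Real.sqrt_sq (Real.exp_pos _).le, euclNorm]
end
end

section
/- Let R̃ : (T,∞) → ℝ^{n×n} be a bounded measurable matrix-valued function such that the improper integral S(t) := ∫_t^∞ R̃(τ) dτ converges (perhaps not absolutely) for each t > T, with S(t) → 0 as t → ∞, and such that the function t ↦ R̃(t) S(t) belongs to L¹(T′,∞) for T′ sufficiently large. Then the linear system dφ/dt + R̃(t)φ = 0 is uniformly stable and every solution is asymptotically constant: each solution φ satisfies φ(t) → φ_∞ for some φ_∞ ∈ ℝⁿ as t → ∞. -/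
/-!
Write `A t` and `B t` for the operators of `R̃ t` and `S t` on Euclidean space, so that
`B' = -A` almost everywhere and `‖B t‖ → 0`. Past a time `T₀` where `‖B‖ ≤ 1/2` and
`∫_{T₀}^∞ ‖A B‖ ≤ 1/4`, the substitution `ψ = (1 + B) ξ` turns `ψ' = -A ψ` into `ξ' = -Q ξ`
with `Q = (1 + B)⁻¹ A B`, and `∫_{T₀}^∞ ‖Q‖ ≤ 1/2`. A maximum-principle bootstrap then gives
`‖ξ t‖ ≤ 2 ‖ξ s‖`, so `Q ξ` is integrable and `ξ` converges; since `B → 0`, `ψ = ξ + B ξ` has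
the same limit. On `(T, T₀]` the bounded coefficient gives a Gronwall bound, and together these
give uniform stability.

As `R̃` is only measurable, `ξ` is merely Lipschitz: its equation comes from its a.e. derivative
(Lebesgue differentiation) and the fundamental theorem of calculus for absolutely continuous
functions.
-/

open MeasureTheory Set Filter
open scoped Topology

noncomputable section

/-- The (operator) norm of a matrix, with respect to the Euclidean norm. -/
def matNorm {n : ℕ} (M : Matrix (Fin n) (Fin n) ℝ) : ℝ :=
  sSup {c : ℝ | ∃ v : Fin n → ℝ, euclNorm v ≤ 1 ∧ c = euclNorm (M.mulVec v)}

/-- `φ` is a solution of the linear system `dφ/dt + M(t) φ = 0` on `(T, ∞)`. -/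
def IsLinSol (n : ℕ) (T : ℝ) (M : ℝ → Matrix (Fin n) (Fin n) ℝ)
    (φ : ℝ → Fin n → ℝ) : Prop :=
  ContinuousOn φ (Ioi T) ∧ ∀ s ∈ Ioi T, ∀ t ∈ Ioi T,
    φ t = φ s - ∫ τ in s..t, (M τ).mulVec (φ τ)

/-- The linear system `dφ/dt + M(t) φ = 0` is uniformly stable on `(T, ∞)`. -/
def UnifStable (n : ℕ) (T : ℝ) (M : ℝ → Matrix (Fin n) (Fin n) ℝ) : Prop :=
  ∀ ε > (0 : ℝ), ∃ δ > (0 : ℝ), ∀ φ : ℝ → Fin n → ℝ, IsLinSol n T M φ →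
    ∀ t₁ ∈ Ioi T, euclNorm (φ t₁) < δ → ∀ t ≥ t₁, euclNorm (φ t) < ε

open scoped NNReal Interval

theorem intervalIntegrable_of_norm_le {F : Type*} [NormedAddCommGroup F] {f : ℝ → F}
    {a b M : ℝ}
    (hf : AEStronglyMeasurable f (volume.restrict (Ι a b))) (hM : ∀ x ∈ Ι a b, ‖f x‖ ≤ M) :
    IntervalIntegrable f volume a b :=
  intervalIntegrable_const.mono_fun' hf (ae_restrict_of_forall_mem measurableSet_uIoc hM)

section VectorValued

variable {F G : Type*} [NormedAddCommGroup F] [NormedSpace ℝ F] [NormedAddCommGroup G]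
  [NormedSpace ℝ G]

theorem ContinuousLinearEquiv.intervalIntegral_comp_comm (L : F ≃L[ℝ] G) (f : ℝ → F)
    (a b : ℝ) : ∫ x in a..b, L (f x) = L (∫ x in a..b, f x) := by
  simp only [intervalIntegral, L.integral_comp_comm, map_sub]

theorem IntervalIntegrable.smul_const {f : ℝ → ℝ} {a b : ℝ}
    (hf : IntervalIntegrable f volume a b) (c : F) :
    IntervalIntegrable (fun t => f t • c) volume a b :=
  ⟨hf.1.smul_const c, hf.2.smul_const c⟩

theorem MeasureTheory.AEStronglyMeasurable.clm_apply {α : Type*} [MeasurableSpace α]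
    {μ : Measure α} {f : α → F →L[ℝ] G} {g : α → F} (hf : AEStronglyMeasurable f μ)
    (hg : AEStronglyMeasurable g μ) : AEStronglyMeasurable (fun x => f x (g x)) μ :=
  (ContinuousLinearMap.id ℝ (F →L[ℝ] G)).aestronglyMeasurable_comp₂ hf hg

theorem IntervalIntegrable.clm_apply_of_continuousOn {f : ℝ → F →L[ℝ] G} {g : ℝ → F}
    {a b : ℝ} (hf : IntervalIntegrable f volume a b) (hg : ContinuousOn g (uIcc a b)) :
    IntervalIntegrable (fun t => f t (g t)) volume a b := by
  obtain ⟨M, hM⟩ := isCompact_uIcc.exists_bound_of_continuousOn hg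
  refine (hf.norm.mul_const M).mono_fun'
    (hf.aestronglyMeasurable_restrict_uIoc.clm_apply
      ((hg.mono uIoc_subset_uIcc).aestronglyMeasurable measurableSet_uIoc))
    (ae_restrict_of_forall_mem measurableSet_uIoc fun t ht => ?_)
  exact (f t).le_opNorm_of_le (hM t (uIoc_subset_uIcc ht))

theorem LipschitzOnWith.clm_apply {α : Type*} [PseudoMetricSpace α] {f : α → F →L[ℝ] G}
    {g : α → F} {s : Set α} {Kf Kg Mf Mg : ℝ≥0} (hf : LipschitzOnWith Kf f s)
    (hg : LipschitzOnWith Kg g s) (hfM : ∀ x ∈ s, ‖f x‖ ≤ Mf) (hgM : ∀ x ∈ s, ‖g x‖ ≤ Mg) :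
    LipschitzOnWith (Kf * Mg + Mf * Kg) (fun x => f x (g x)) s := by
  refine LipschitzOnWith.of_dist_le_mul fun x hx y hy => ?_
  have hsplit : f x (g x) - f y (g y) = (f x - f y) (g x) + f y (g x - g y) := by
    simp only [sub_apply, map_sub]; abel
  rw [dist_eq_norm, hsplit]
  calc ‖(f x - f y) (g x) + f y (g x - g y)‖
      ≤ ‖f x - f y‖ * ‖g x‖ + ‖f y‖ * ‖g x - g y‖ :=
        norm_add_le_of_le ((f x - f y).le_opNorm _) ((f y).le_opNorm _)
    _ ≤ Kf * dist x y * Mg + Mf * (Kg * dist x y) := by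
        rw [← dist_eq_norm, ← dist_eq_norm]
        gcongr
        exacts [hf.dist_le_mul x hx y hy, hgM x hx, hfM y hy, hg.dist_le_mul x hx y hy]
    _ = ↑(Kf * Mg + Mf * Kg) * dist x y := by push_cast; ring

theorem lipschitzOnWith_of_eq_sub_integral {f g : ℝ → F} {s : Set ℝ} {K : ℝ≥0}
    (hs : s.OrdConnected) (hf : ∀ x ∈ s, ∀ y ∈ s, f y = f x - ∫ τ in x..y, g τ)
    (hg : ∀ x ∈ s, ‖g x‖ ≤ K) : LipschitzOnWith K f s := by
  refine LipschitzOnWith.of_dist_le_mul fun x hx y hy => ?_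
  rw [dist_eq_norm, hf x hx y hy, sub_sub_cancel, Real.dist_eq, abs_sub_comm]
  exact intervalIntegral.norm_integral_le_of_norm_le_const fun τ hτ =>
    hg τ (hs.uIcc_subset hx hy (uIoc_subset_uIcc hτ))

theorem intervalIntegral.integral_eq_sub_of_tendsto {f : ℝ → F} {s t : ℝ} {Ls Lt : F}
    (hs : Tendsto (fun u => ∫ τ in s..u, f τ) atTop (𝓝 Ls))
    (ht : Tendsto (fun u => ∫ τ in t..u, f τ) atTop (𝓝 Lt))
    (hst : IntervalIntegrable f volume s t)
    (htu : ∀ᶠ u in atTop, IntervalIntegrable f volume t u) :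
    ∫ τ in s..t, f τ = Ls - Lt := by
  have hs' : Tendsto (fun u => ∫ τ in s..u, f τ) atTop (𝓝 ((∫ τ in s..t, f τ) + Lt)) :=
    (ht.const_add _).congr' (htu.mono fun u hu => integral_add_adjacent_intervals hst hu)
  rw [tendsto_nhds_unique hs hs', add_sub_cancel_right]

variable [CompleteSpace F]

theorem ae_hasDerivAt_of_eq_sub_integral {f g : ℝ → F} {U : Set ℝ} {a b : ℝ} (hU : IsOpen U)
    (hab : uIcc a b ⊆ U) (hf : ∀ t ∈ U, f t = f a - ∫ τ in a..t, g τ)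
    (hg : IntervalIntegrable g volume a b) :
    ∀ᵐ x, x ∈ uIcc a b → HasDerivAt f (-g x) x := by
  filter_upwards [hg.ae_hasDerivAt_integral] with x hx hxab
  refine ((hx hxab a left_mem_uIcc).const_sub (f a)).congr_of_eventuallyEq ?_
  filter_upwards [hU.mem_nhds (hab hxab)] with t ht using hf t ht

theorem AbsolutelyContinuousOnInterval.sub_eq_integral_of_ae_hasDerivAt {f g : ℝ → F}
    {a b : ℝ} {M : ℝ≥0} (hf : AbsolutelyContinuousOnInterval f a b)
    (hg : IntervalIntegrable g volume a b) (hgM : ∀ x ∈ uIcc a b, ‖g x‖ ≤ M)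
    (hderiv : ∀ᵐ x, x ∈ uIcc a b → HasDerivAt f (g x) x) :
    f b - f a = ∫ x in a..b, g x := by
  have hga : ∀ x ∈ uIcc a b, IntervalIntegrable g volume a x := fun x hx =>
    hg.mono_set (uIcc_subset_uIcc left_mem_uIcc hx)
  -- the bound on `g` makes its primitive Lipschitz, hence absolutely continuous
  have hprim : AbsolutelyContinuousOnInterval (fun x => -∫ τ in a..x, g τ) a b :=
    (lipschitzOnWith_of_eq_sub_integral ordConnected_uIcc (fun x hx y hy => by
      rw [← intervalIntegral.integral_add_adjacent_intervals (hga x hx)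
        ((hga x hx).symm.trans (hga y hy))]
      abel) hgM).absolutelyContinuousOnInterval
  obtain ⟨c, hc⟩ := (hf.add hprim).const_of_ae_hasDerivAt_zero (by
    filter_upwards [hderiv, hg.ae_hasDerivAt_integral] with x hfx hprimx hx
    exact add_neg_cancel (g x) ▸ (hfx hx).add (hprimx hx a left_mem_uIcc).neg)
  have hca := hc a left_mem_uIcc
  have hcb := hc b right_mem_uIcc
  simp only [Pi.add_apply, intervalIntegral.integral_same, neg_zero, add_zero] at hca hcb
  rw [← hca, ← sub_eq_add_neg, sub_eq_iff_eq_add] at hcb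
  rw [hcb, add_sub_cancel_left]

end VectorValued

theorem le_mul_exp_of_le_add_integral {u : ℝ → ℝ} {a b δ K : ℝ} (hK : 0 ≤ K)
    (hu : ContinuousOn u (Icc a b)) (h : ∀ t ∈ Icc a b, u t ≤ δ + ∫ τ in a..t, K * u τ) :
    ∀ t ∈ Icc a b, u t ≤ δ * Real.exp (K * (t - a)) := by
  intro t ht
  have hab : a ≤ b := ht.1.trans ht.2
  -- extend `u` continuously to `ℝ`, so that its primitive is differentiable everywhere
  set v : ℝ → ℝ := IccExtend hab ((Icc a b).domRestrict u)
  have hv : Continuous v := continuous_IccExtend_iff.2 hu.domRestrict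
  have hvu : ∀ x ∈ Icc a b, v x = u x := fun x hx => IccExtend_of_mem hab _ hx
  set F : ℝ → ℝ := fun x => δ + ∫ τ in a..x, K * v τ
  have hF : ∀ x, HasDerivAt F (K * v x) x := fun x =>
    ((hv.const_mul K).integral_hasStrictDerivAt a x).hasDerivAt.const_add δ
  have hFu : ∀ x ∈ Icc a b, u x ≤ F x := fun x hx => by
    refine (h x hx).trans_eq ?_
    congr 1
    refine intervalIntegral.integral_congr fun τ hτ => ?_
    rw [uIcc_of_le hx.1] at hτ
    rw [hvu τ ⟨hτ.1, hτ.2.trans hx.2⟩]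
  have hgron := le_gronwallBound_of_liminf_deriv_right_le (f := F) (δ := δ) (ε := 0)
    (fun x _ => (hF x).continuousAt.continuousWithinAt)
    (fun x _ _ hr => (hF x).hasDerivWithinAt.liminf_right_slope_le hr)
    (by simp [F]) (fun x hx => by
      rw [add_zero, hvu x (Ico_subset_Icc_self hx)]
      exact mul_le_mul_of_nonneg_left (hFu x (Ico_subset_Icc_self hx)) hK) t ht
  rw [gronwallBound_ε0] at hgron
  exact (hFu t ht).trans hgron

theorem le_two_mul_of_le_add_integral {u k : ℝ → ℝ} {a b δ : ℝ} (hab : a ≤ b)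
    (hu : ContinuousOn u (Icc a b)) (hu0 : ∀ t ∈ Icc a b, 0 ≤ u t)
    (hk : IntervalIntegrable k volume a b) (hk0 : ∀ t ∈ Icc a b, 0 ≤ k t)
    (hk_small : ∫ τ in a..b, k τ ≤ 1 / 2)
    (h : ∀ t ∈ Icc a b, u t ≤ δ + ∫ τ in a..t, k τ * u τ) :
    ∀ t ∈ Icc a b, u t ≤ 2 * δ := by
  obtain ⟨c, hc, hmax⟩ := isCompact_Icc.exists_isMaxOn (nonempty_Icc.2 hab) hu
  have hac : Icc a c ⊆ Icc a b := Icc_subset_Icc le_rfl hc.2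
  have hkc : IntervalIntegrable k volume a c :=
    hk.mono_set (by rwa [uIcc_of_le hc.1, uIcc_of_le hab])
  have hint : ∫ τ in a..c, k τ * u τ ≤ (∫ τ in a..c, k τ) * u c := by
    rw [← intervalIntegral.integral_mul_const]
    refine intervalIntegral.integral_mono_on hc.1
      (hkc.mul_continuousOn (by rw [uIcc_of_le hc.1]; exact hu.mono hac))
      (hkc.mul_const _) fun τ hτ => ?_
    exact mul_le_mul_of_nonneg_left (hmax (hac hτ)) (hk0 τ (hac hτ))
  have hkac : ∫ τ in a..c, k τ ≤ 1 / 2 :=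
    (intervalIntegral.integral_mono_interval le_rfl hc.1 hc.2
      (ae_restrict_of_forall_mem measurableSet_Ioc fun τ hτ => hk0 τ (Ioc_subset_Icc_self hτ))
      hk).trans hk_small
  have huc : u c ≤ δ + u c / 2 := by
    nlinarith [h c hc, mul_le_mul_of_nonneg_right hkac (hu0 c hc)]
  intro t ht
  have hut : u t ≤ u c := hmax ht
  linarith

theorem HasDerivAt.ringInverse {R : Type*} [NormedRing R] [NormedAlgebra ℝ R]
    [HasSummableGeomSeries R] {f : ℝ → R} {f' : R} {x : ℝ} (hf : HasDerivAt f f' x)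
    (hx : IsUnit (f x)) :
    HasDerivAt (fun t => Ring.inverse (f t))
      (-(Ring.inverse (f x) * f' * Ring.inverse (f x))) x := by
  obtain ⟨u, hu⟩ := hx
  have h := hasFDerivAt_ringInverse (𝕜 := ℝ) u
  rw [hu] at h
  refine (h.comp_hasDerivAt x hf).congr_deriv ?_
  simp [← hu]

theorem exists_gt_forall_le_and_setIntegral_Ioi_le {b q : ℝ → ℝ} {T T' ε δ : ℝ}
    (hb : Tendsto b atTop (𝓝 0)) (hε : 0 < ε) (hq : IntegrableOn q (Ioi T')) (hδ : 0 < δ) :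
    ∃ T₀, T < T₀ ∧ (∀ t ∈ Ioi T₀, b t ≤ ε) ∧ IntegrableOn q (Ioi T₀) ∧
      ∫ t in Ioi T₀, q t ≤ δ := by
  obtain ⟨T₀, hT₀⟩ := eventually_atTop.1 <| (hb.eventually (eventually_le_nhds hε)).and <|
    ((tendsto_integral_Ioi_zero (μ := volume) (f := q) tendsto_id).eventually
      (eventually_le_nhds hδ)).and (eventually_gt_atTop (max T T'))
  obtain ⟨-, hq_small, hT₀T⟩ := hT₀ T₀ le_rfl
  exact ⟨T₀, (le_max_left T T').trans_lt hT₀T, fun t ht => (hT₀ t ht.le).1,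
    hq.mono_set (Ioi_subset_Ioi ((le_max_right T T').trans hT₀T.le)), hq_small⟩

section Operators

variable {E : Type*} [NormedAddCommGroup E] [NormedSpace ℝ E]

def IsIntegralSolution (A : ℝ → E →L[ℝ] E) (T : ℝ) (ψ : ℝ → E) : Prop :=
  ContinuousOn ψ (Ioi T) ∧ ∀ s ∈ Ioi T, ∀ t ∈ Ioi T, ψ t = ψ s - ∫ τ in s..t, A τ (ψ τ)

namespace IsIntegralSolution

variable {A : ℝ → E →L[ℝ] E} {T : ℝ} {ψ : ℝ → E}

theorem mono (hψ : IsIntegralSolution A T ψ) {T' : ℝ} (hT : T ≤ T') :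
    IsIntegralSolution A T' ψ :=
  ⟨hψ.1.mono (Ioi_subset_Ioi hT), fun s hs t ht =>
    hψ.2 s (lt_of_le_of_lt hT hs) t (lt_of_le_of_lt hT ht)⟩

theorem norm_le_add_integral (hψ : IsIntegralSolution A T ψ) {k : ℝ → ℝ} {s t : ℝ}
    (hs : T < s) (hst : s ≤ t) (hk : IntervalIntegrable k volume s t)
    (hAk : ∀ τ ∈ Icc s t, ‖A τ‖ ≤ k τ) :
    ‖ψ t‖ ≤ ‖ψ s‖ + ∫ τ in s..t, k τ * ‖ψ τ‖ := by
  have hsub : uIcc s t ⊆ Ioi T := by rw [uIcc_of_le hst]; exact fun τ hτ => hs.trans_le hτ.1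
  rw [hψ.2 s hs t (hs.trans_le hst)]
  refine (norm_sub_le _ _).trans ((add_le_add_iff_left _).2 ?_)
  refine intervalIntegral.norm_integral_le_of_norm_le hst (ae_of_all _ fun τ hτ => ?_)
    (hk.mul_continuousOn (continuous_norm.comp_continuousOn (hψ.1.mono hsub)))
  exact ((A τ).le_opNorm _).trans
    (mul_le_mul_of_nonneg_right (hAk τ (Ioc_subset_Icc_self hτ)) (norm_nonneg _))

theorem norm_le_exp_mul (hψ : IsIntegralSolution A T ψ) {C : ℝ}
    (hAC : ∀ t ∈ Ioi T, ‖A t‖ ≤ C) {s t : ℝ} (hs : T < s) (hst : s ≤ t) :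
    ‖ψ t‖ ≤ Real.exp (C * (t - s)) * ‖ψ s‖ := by
  rw [mul_comm]
  refine le_mul_exp_of_le_add_integral ((norm_nonneg _).trans (hAC s hs))
    (continuous_norm.comp_continuousOn (hψ.1.mono fun τ hτ => hs.trans_le hτ.1))
    (fun r hr => hψ.norm_le_add_integral hs hr.1 intervalIntegrable_const
      fun τ hτ => hAC τ (hs.trans_le hτ.1)) t ⟨hst, le_rfl⟩

theorem norm_le_mul_exp_of_forall_ge (hψ : IsIntegralSolution A T ψ) {C c m : ℝ}
    (hAC : ∀ t ∈ Ioi T, ‖A t‖ ≤ C) (hm : T < m) (hc : 1 ≤ c)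
    (htail : ∀ s t, m ≤ s → s ≤ t → ‖ψ t‖ ≤ c * ‖ψ s‖) {s t : ℝ} (hs : T < s) (hst : s ≤ t) :
    ‖ψ t‖ ≤ c * Real.exp (C * (m - T)) * ‖ψ s‖ := by
  have hC : 0 ≤ C := (norm_nonneg _).trans (hAC s hs)
  have hexp : ∀ r, r ≤ m → Real.exp (C * (r - s)) ≤ c * Real.exp (C * (m - T)) := fun r hr =>
    (Real.exp_le_exp.2 (by nlinarith)).trans (le_mul_of_one_le_left (Real.exp_pos _).le hc)
  rcases le_total t m with htm | hmt
  · exact (hψ.norm_le_exp_mul hAC hs hst).trans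
      (mul_le_mul_of_nonneg_right (hexp t htm) (norm_nonneg _))
  rcases le_total m s with hms | hsm
  · exact (htail s t hms hst).trans (by
      gcongr; exact le_mul_of_one_le_right (by linarith) (Real.one_le_exp (by nlinarith)))
  calc ‖ψ t‖ ≤ c * ‖ψ m‖ := htail m t le_rfl hmt
    _ ≤ c * (Real.exp (C * (m - s)) * ‖ψ s‖) := by
        gcongr; exact hψ.norm_le_exp_mul hAC hs hsm
    _ ≤ c * Real.exp (C * (m - T)) * ‖ψ s‖ := by
        rw [← mul_assoc]; gcongr

theorem norm_le_two_mul (hψ : IsIntegralSolution A T ψ) (hA : IntegrableOn A (Ioi T))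
    (hA_small : ∫ t in Ioi T, ‖A t‖ ≤ 1 / 2) {s t : ℝ} (hs : T < s) (hst : s ≤ t) :
    ‖ψ t‖ ≤ 2 * ‖ψ s‖ := by
  have hsub : Icc s t ⊆ Ioi T := fun τ hτ => hs.trans_le hτ.1
  have hAint : IntervalIntegrable (fun τ => ‖A τ‖) volume s t :=
    (intervalIntegrable_iff_integrableOn_Icc_of_le hst).2 (hA.mono_set hsub).norm
  refine le_two_mul_of_le_add_integral hst
    (continuous_norm.comp_continuousOn (hψ.1.mono hsub)) (fun _ _ => norm_nonneg _) hAint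
    (fun _ _ => norm_nonneg _) ?_ (fun r hr => hψ.norm_le_add_integral hs hr.1
      (hAint.mono_set (by rw [uIcc_of_le hr.1, uIcc_of_le hst]; exact Icc_subset_Icc le_rfl hr.2))
      fun τ _ => le_rfl) t ⟨hst, le_rfl⟩
  rw [intervalIntegral.integral_of_le hst]
  exact (setIntegral_mono_set hA.norm (ae_of_all _ fun _ => norm_nonneg _)
    (Ioc_subset_Ioi_self.trans (Ioi_subset_Ioi hs.le)).eventuallyLE).trans hA_small

theorem exists_tendsto (hψ : IsIntegralSolution A T ψ) (hA : IntegrableOn A (Ioi T))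
    (hA_small : ∫ t in Ioi T, ‖A t‖ ≤ 1 / 2) : ∃ L, Tendsto ψ atTop (𝓝 L) := by
  set s := T + 1
  have hs : T < s := lt_add_one T
  have hint : IntegrableOn (fun τ => A τ (ψ τ)) (Ioi s) := by
    have hAs := hA.mono_set (Ioi_subset_Ioi hs.le)
    refine (hAs.norm.mul_const (2 * ‖ψ s‖)).mono'
      (hAs.aestronglyMeasurable.clm_apply
        ((hψ.1.mono (Ioi_subset_Ioi hs.le)).aestronglyMeasurable measurableSet_Ioi))
      (ae_restrict_of_forall_mem measurableSet_Ioi fun τ hτ => ?_)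
    exact (A τ).le_opNorm_of_le (hψ.norm_le_two_mul hA hA_small hs (le_of_lt hτ))
  refine ⟨ψ s - ∫ τ in Ioi s, A τ (ψ τ), ?_⟩
  refine ((intervalIntegral_tendsto_integral_Ioi s hint tendsto_id).const_sub (ψ s)).congr' ?_
  filter_upwards [eventually_gt_atTop T] with t ht
  exact (hψ.2 s hs t ht).symm

theorem lipschitzOnWith (hψ : IsIntegralSolution A T ψ) {C M : ℝ≥0}
    (hAC : ∀ t ∈ Ioi T, ‖A t‖ ≤ C) {s t : ℝ} (hsub : uIcc s t ⊆ Ioi T)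
    (hM : ∀ τ ∈ uIcc s t, ‖ψ τ‖ ≤ M) : LipschitzOnWith (C * M) ψ (uIcc s t) :=
  lipschitzOnWith_of_eq_sub_integral ordConnected_uIcc
    (fun x hx y hy => hψ.2 x (hsub hx) y (hsub hy)) fun τ hτ => by
      rw [NNReal.coe_mul]; exact (A τ).le_of_opNorm_le_of_le (hAC τ (hsub hτ)) (hM τ hτ)

end IsIntegralSolution

theorem ContinuousLinearMap.eq_inverse_one_add_apply_add {B : E →L[ℝ] E} (hB : IsUnit (1 + B))
    (y : E) : y = Ring.inverse (1 + B) y + B (Ring.inverse (1 + B) y) := by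
  simpa using congr($(Ring.mul_inverse_cancel _ hB) y).symm

variable [CompleteSpace E]

namespace ContinuousLinearMap

theorem isUnit_one_add_of_norm_lt_one {B : E →L[ℝ] E} (hB : ‖B‖ < 1) : IsUnit (1 + B) := by
  simpa using isUnit_one_sub_of_norm_lt_one (x := -B) (by rwa [norm_neg])

theorem norm_inverse_one_add_le_two {B : E →L[ℝ] E} (hB : ‖B‖ ≤ 1 / 2) :
    ‖Ring.inverse (1 + B)‖ ≤ 2 := by
  refine opNorm_le_bound _ zero_le_two fun y => ?_
  have hyz := eq_inverse_one_add_apply_add (isUnit_one_add_of_norm_lt_one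
    (hB.trans_lt one_half_lt_one)) y
  set z := Ring.inverse (1 + B) y
  have hBz : ‖B z‖ ≤ ‖z‖ / 2 := (B.le_opNorm z).trans (by nlinarith [norm_nonneg z])
  have hz := norm_sub_le (z + B z) (B z)
  rw [add_sub_cancel_right, ← hyz] at hz
  linarith

theorem norm_inverse_one_add_mul_le {B : E →L[ℝ] E} (hB : ‖B‖ ≤ 1 / 2) (X : E →L[ℝ] E) :
    ‖Ring.inverse (1 + B) * X‖ ≤ 2 * ‖X‖ :=
  (norm_mul_le _ _).trans
    (mul_le_mul_of_nonneg_right (norm_inverse_one_add_le_two hB) (norm_nonneg _))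

theorem norm_inverse_one_add_mul_mul_le {A B : E →L[ℝ] E} {C : ℝ}
    (hA : ‖A‖ ≤ C) (hB : ‖B‖ ≤ 1 / 2) : ‖Ring.inverse (1 + B) * (A * B)‖ ≤ C := calc
  ‖Ring.inverse (1 + B) * (A * B)‖ ≤ 2 * (‖A‖ * ‖B‖) :=
    (norm_inverse_one_add_mul_le hB _).trans (by gcongr; exact norm_mul_le _ _)
  _ ≤ 2 * (C * (1 / 2)) := by gcongr; exact (norm_nonneg _).trans hA
  _ = C := by ring

variable {B : ℝ → E →L[ℝ] E} {s : Set ℝ}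

theorem continuousOn_inverse_one_add (hB : ContinuousOn B s)
    (hB_half : ∀ t ∈ s, ‖B t‖ ≤ 1 / 2) : ContinuousOn (fun t => Ring.inverse (1 + B t)) s :=
  fun t ht => by
    have hu := isUnit_one_add_of_norm_lt_one ((hB_half t ht).trans_lt one_half_lt_one)
    have hinv := NormedRing.inverse_continuousAt hu.unit
    rw [hu.unit_spec] at hinv
    exact hinv.comp_continuousWithinAt (f := fun t => 1 + B t)
      (continuousWithinAt_const.add (hB t ht))

theorem lipschitzOnWith_inverse_one_add {K : ℝ≥0} (hB : LipschitzOnWith K B s)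
    (hB_half : ∀ t ∈ s, ‖B t‖ ≤ 1 / 2) :
    LipschitzOnWith (4 * K) (fun t => Ring.inverse (1 + B t)) s := by
  refine LipschitzOnWith.of_dist_le_mul fun x hx y hy => ?_
  have hunit : ∀ t ∈ s, IsUnit (1 + B t) := fun t ht =>
    isUnit_one_add_of_norm_lt_one ((hB_half t ht).trans_lt one_half_lt_one)
  rw [dist_eq_norm, Ring.inverse_sub_inverse (iff_of_true (hunit x hx) (hunit y hy)),
    add_sub_add_left_eq_sub]
  calc ‖Ring.inverse (1 + B x) * (B y - B x) * Ring.inverse (1 + B y)‖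
      ≤ 2 * ‖B y - B x‖ * 2 :=
        (norm_mul_le _ _).trans (mul_le_mul (norm_inverse_one_add_mul_le (hB_half x hx) _)
          (norm_inverse_one_add_le_two (hB_half y hy)) (norm_nonneg _) (by positivity))
    _ ≤ ↑(4 * K) * dist x y := by
        rw [← dist_eq_norm, dist_comm]; push_cast
        nlinarith [hB.dist_le_mul x hx y hy]

theorem aestronglyMeasurable_inverse_one_add_mul {A : ℝ → E →L[ℝ] E}
    (hA : AEStronglyMeasurable A volume) (hB : ContinuousOn B s)
    (hB_half : ∀ t ∈ s, ‖B t‖ ≤ 1 / 2) (hs : MeasurableSet s) :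
    AEStronglyMeasurable (fun t => Ring.inverse (1 + B t) * (A t * B t)) (volume.restrict s) :=
  ((continuousOn_inverse_one_add hB hB_half).aestronglyMeasurable hs).mul
    (hA.restrict.mul (hB.aestronglyMeasurable hs))

theorem hasDerivAt_inverse_one_add_apply {ψ : ℝ → E} {A : E →L[ℝ] E} {x : ℝ}
    (hB : HasDerivAt B (-A) x) (hψ : HasDerivAt ψ (-A (ψ x)) x) (hx : IsUnit (1 + B x)) :
    HasDerivAt (fun t => Ring.inverse (1 + B t) (ψ t))
      (-(Ring.inverse (1 + B x) * (A * B x)) (Ring.inverse (1 + B x) (ψ x))) x := by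
  refine (((hB.const_add 1).ringInverse hx).clm_apply hψ).congr_deriv ?_
  have hψz := eq_inverse_one_add_apply_add hx (ψ x)
  simp only [neg_apply, mul_apply_eq_comp, map_neg, neg_neg]
  set z := Ring.inverse (1 + B x) (ψ x)
  rw [hψz, map_add, map_add]
  abel

theorem integrableOn_inverse_one_add_mul {A : ℝ → E →L[ℝ] E} {T : ℝ}
    (hA : AEStronglyMeasurable A volume) (hB : ContinuousOn B (Ioi T))
    (hB_half : ∀ t ∈ Ioi T, ‖B t‖ ≤ 1 / 2) (hAB : IntegrableOn (fun t => ‖A t * B t‖) (Ioi T)) :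
    IntegrableOn (fun t => Ring.inverse (1 + B t) * (A t * B t)) (Ioi T) :=
  (hAB.const_mul 2).mono'
    (aestronglyMeasurable_inverse_one_add_mul hA hB hB_half measurableSet_Ioi)
    (ae_restrict_of_forall_mem measurableSet_Ioi fun t ht =>
      norm_inverse_one_add_mul_le (hB_half t ht) _)

theorem setIntegral_norm_inverse_one_add_mul_le {A : ℝ → E →L[ℝ] E} {T : ℝ}
    (hB_half : ∀ t ∈ Ioi T, ‖B t‖ ≤ 1 / 2) (hAB : IntegrableOn (fun t => ‖A t * B t‖) (Ioi T)) :
    ∫ t in Ioi T, ‖Ring.inverse (1 + B t) * (A t * B t)‖ ≤ 2 * ∫ t in Ioi T, ‖A t * B t‖ := by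
  rw [← integral_const_mul]
  exact integral_mono_of_nonneg (ae_of_all _ fun _ => norm_nonneg _) (hAB.const_mul 2)
    (ae_restrict_of_forall_mem measurableSet_Ioi fun t ht =>
      norm_inverse_one_add_mul_le (hB_half t ht) _)

end ContinuousLinearMap

namespace IsIntegralSolution

variable {A B : ℝ → E →L[ℝ] E} {T : ℝ} {C : ℝ≥0} {ψ : ℝ → E}

theorem ae_hasDerivAt_inverse_one_add_apply (hψ : IsIntegralSolution A T ψ)
    (hB : ∀ s ∈ Ioi T, ∀ t ∈ Ioi T, B t = B s - ∫ τ in s..t, A τ)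
    (hB_half : ∀ t ∈ Ioi T, ‖B t‖ ≤ 1 / 2) {s t : ℝ} (hs : s ∈ Ioi T) (ht : t ∈ Ioi T)
    (hA : IntervalIntegrable A volume s t) :
    ∀ᵐ x, x ∈ uIcc s t → HasDerivAt (fun t => Ring.inverse (1 + B t) (ψ t))
      (-(Ring.inverse (1 + B x) * (A x * B x)) (Ring.inverse (1 + B x) (ψ x))) x := by
  have hsub : uIcc s t ⊆ Ioi T := ordConnected_Ioi.uIcc_subset hs ht
  filter_upwards [ae_hasDerivAt_of_eq_sub_integral isOpen_Ioi hsub (hψ.2 s hs)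
      (hA.clm_apply_of_continuousOn (hψ.1.mono hsub)),
    ae_hasDerivAt_of_eq_sub_integral isOpen_Ioi hsub (hB s hs) hA] with x hψx hBx hx
  exact ContinuousLinearMap.hasDerivAt_inverse_one_add_apply (hBx hx) (hψx hx)
    (ContinuousLinearMap.isUnit_one_add_of_norm_lt_one
      ((hB_half x (hsub hx)).trans_lt one_half_lt_one))

theorem inverse_one_add (hψ : IsIntegralSolution A T ψ) (hA : AEStronglyMeasurable A volume)
    (hAC : ∀ t ∈ Ioi T, ‖A t‖ ≤ C)
    (hB : ∀ s ∈ Ioi T, ∀ t ∈ Ioi T, B t = B s - ∫ τ in s..t, A τ)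
    (hB_half : ∀ t ∈ Ioi T, ‖B t‖ ≤ 1 / 2) :
    IsIntegralSolution (fun t => Ring.inverse (1 + B t) * (A t * B t)) T
      (fun t => Ring.inverse (1 + B t) (ψ t)) := by
  set W := fun t => Ring.inverse (1 + B t)
  set Q := fun t => W t * (A t * B t)
  set ξ := fun t => W t (ψ t)
  have hBlip : LipschitzOnWith C B (Ioi T) :=
    lipschitzOnWith_of_eq_sub_integral ordConnected_Ioi hB hAC
  have hWlip : LipschitzOnWith (4 * C) W (Ioi T) :=
    ContinuousLinearMap.lipschitzOnWith_inverse_one_add hBlip hB_half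
  have hW2 : ∀ t ∈ Ioi T, ‖W t‖ ≤ 2 := fun t ht =>
    ContinuousLinearMap.norm_inverse_one_add_le_two (hB_half t ht)
  refine ⟨hWlip.continuousOn.clm_apply hψ.1, fun s hs t ht => ?_⟩
  have hsub : uIcc s t ⊆ Ioi T := ordConnected_Ioi.uIcc_subset hs ht
  obtain ⟨M, hM⟩ := isCompact_uIcc.exists_bound_of_continuousOn (hψ.1.mono hsub)
  have hM' : ∀ τ ∈ uIcc s t, ‖ψ τ‖ ≤ M.toNNReal := fun τ hτ =>
    (hM τ hτ).trans (Real.le_coe_toNNReal M)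
  have hξlip : LipschitzOnWith _ ξ (uIcc s t) :=
    (hWlip.mono hsub).clm_apply (hψ.lipschitzOnWith hAC hsub hM') (Mf := 2)
      (fun τ hτ => by simpa using hW2 τ (hsub hτ)) hM'
  have hbound : ∀ τ ∈ uIcc s t, ‖Q τ (ξ τ)‖ ≤ ↑(C * (2 * M.toNNReal)) := fun τ hτ => by
    push_cast
    exact (Q τ).le_of_opNorm_le_of_le (ContinuousLinearMap.norm_inverse_one_add_mul_mul_le
      (hAC τ (hsub hτ)) (hB_half τ (hsub hτ)))
      ((W τ).le_of_opNorm_le_of_le (hW2 τ (hsub hτ)) (hM' τ hτ))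
  have hAint : IntervalIntegrable A volume s t :=
    intervalIntegrable_of_norm_le hA.restrict fun τ hτ => hAC τ (hsub (uIoc_subset_uIcc hτ))
  have hΙ : Ι s t ⊆ Ioi T := uIoc_subset_uIcc.trans hsub
  have hQξ : IntervalIntegrable (fun τ => Q τ (ξ τ)) volume s t :=
    intervalIntegrable_of_norm_le
      ((ContinuousLinearMap.aestronglyMeasurable_inverse_one_add_mul hA
          (hBlip.continuousOn.mono hΙ) (fun τ hτ => hB_half τ (hΙ hτ)) measurableSet_uIoc).clm_apply
        (((hWlip.continuousOn.clm_apply hψ.1).mono hΙ).aestronglyMeasurable measurableSet_uIoc))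
      fun τ hτ => hbound τ (uIoc_subset_uIcc hτ)
  have hderiv : ∀ᵐ x, x ∈ uIcc s t → HasDerivAt ξ (-Q x (ξ x)) x :=
    hψ.ae_hasDerivAt_inverse_one_add_apply hB hB_half hs ht hAint
  have key := hξlip.absolutelyContinuousOnInterval.sub_eq_integral_of_ae_hasDerivAt
    (g := fun τ => -Q τ (ξ τ)) hQξ.neg (fun τ hτ => by rw [norm_neg]; exact hbound τ hτ) hderiv
  show ξ t = ξ s - ∫ τ in s..t, Q τ (ξ τ)
  rw [intervalIntegral.integral_neg, sub_eq_iff_eq_add'] at key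
  rw [key, ← sub_eq_add_neg]

theorem norm_le_eight_mul_and_exists_tendsto (hψ : IsIntegralSolution A T ψ)
    (hA : AEStronglyMeasurable A volume) (hAC : ∀ t ∈ Ioi T, ‖A t‖ ≤ C)
    (hB : ∀ s ∈ Ioi T, ∀ t ∈ Ioi T, B t = B s - ∫ τ in s..t, A τ)
    (hB_half : ∀ t ∈ Ioi T, ‖B t‖ ≤ 1 / 2) (hB0 : Tendsto (fun t => ‖B t‖) atTop (𝓝 0))
    (hAB : IntegrableOn (fun t => ‖A t * B t‖) (Ioi T))
    (hAB_small : ∫ t in Ioi T, ‖A t * B t‖ ≤ 1 / 4) :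
    (∀ s t, T < s → s ≤ t → ‖ψ t‖ ≤ 8 * ‖ψ s‖) ∧ ∃ L, Tendsto ψ atTop (𝓝 L) := by
  set W := fun t => Ring.inverse (1 + B t)
  set Q := fun t => W t * (A t * B t)
  have hξ := hψ.inverse_one_add hA hAC hB hB_half
  have hQ : IntegrableOn Q (Ioi T) :=
    ContinuousLinearMap.integrableOn_inverse_one_add_mul hA
      (lipschitzOnWith_of_eq_sub_integral ordConnected_Ioi hB hAC).continuousOn hB_half hAB
  have hQ_small : ∫ t in Ioi T, ‖Q t‖ ≤ 1 / 2 := by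
    linarith [ContinuousLinearMap.setIntegral_norm_inverse_one_add_mul_le hB_half hAB]
  have hψξ : ∀ t ∈ Ioi T, ψ t = W t (ψ t) + B t (W t (ψ t)) := fun t ht =>
    ContinuousLinearMap.eq_inverse_one_add_apply_add
      (ContinuousLinearMap.isUnit_one_add_of_norm_lt_one
        ((hB_half t ht).trans_lt one_half_lt_one)) _
  refine ⟨fun s t hs hst => ?_, ?_⟩
  · have ht : t ∈ Ioi T := hs.trans_le hst
    calc ‖ψ t‖ = ‖W t (ψ t) + B t (W t (ψ t))‖ := by rw [← hψξ t ht]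
      _ ≤ 2 * ‖W t (ψ t)‖ := (norm_add_le_of_le le_rfl
          ((B t).le_of_opNorm_le (hB_half t ht) _)).trans (by linarith [norm_nonneg (W t (ψ t))])
      _ ≤ 2 * (2 * ‖W s (ψ s)‖) := by gcongr; exact hξ.norm_le_two_mul hQ hQ_small hs hst
      _ ≤ 2 * (2 * (2 * ‖ψ s‖)) := by
          gcongr
          exact (W s).le_of_opNorm_le
            (ContinuousLinearMap.norm_inverse_one_add_le_two (hB_half s hs)) _
      _ = 8 * ‖ψ s‖ := by ring
  · obtain ⟨L, hL⟩ := hξ.exists_tendsto hQ hQ_small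
    have hBξ : Tendsto (fun t => B t (W t (ψ t))) atTop (𝓝 0) :=
      squeeze_zero_norm' (Eventually.of_forall fun t => (B t).le_opNorm _)
        (by simpa using hB0.mul hL.norm)
    refine ⟨L, ?_⟩
    have hψL := (hL.add hBξ).congr' (f₂ := ψ) <| by
      filter_upwards [eventually_gt_atTop T] with t ht
      exact (hψξ t ht).symm
    rwa [add_zero] at hψL

end IsIntegralSolution

theorem exists_norm_le_mul_and_tendsto_of_tendsto_integral {A B : ℝ → E →L[ℝ] E} {T : ℝ}
    {C : ℝ≥0} (hA : AEStronglyMeasurable A volume) (hAC : ∀ t ∈ Ioi T, ‖A t‖ ≤ C)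
    (hB : ∀ t ∈ Ioi T, Tendsto (fun u => ∫ τ in t..u, A τ) atTop (𝓝 (B t)))
    (hB0 : Tendsto (fun t => ‖B t‖) atTop (𝓝 0))
    (hAB : ∃ T', IntegrableOn (fun t => ‖A t * B t‖) (Ioi T')) :
    ∃ K, ∀ ψ, IsIntegralSolution A T ψ →
      (∀ s t, T < s → s ≤ t → ‖ψ t‖ ≤ K * ‖ψ s‖) ∧ ∃ L, Tendsto ψ atTop (𝓝 L) := by
  have hAint : ∀ s ∈ Ioi T, ∀ t ∈ Ioi T, IntervalIntegrable A volume s t := fun s hs t ht =>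
    intervalIntegrable_of_norm_le hA.restrict fun τ hτ =>
      hAC τ (ordConnected_Ioi.uIcc_subset hs ht (uIoc_subset_uIcc hτ))
  have hBeq : ∀ s ∈ Ioi T, ∀ t ∈ Ioi T, B t = B s - ∫ τ in s..t, A τ := fun s hs t ht => by
    rw [intervalIntegral.integral_eq_sub_of_tendsto (hB s hs) (hB t ht) (hAint s hs t ht)
      ((eventually_gt_atTop T).mono fun u hu => hAint t ht u hu), sub_sub_cancel]
  obtain ⟨T', hAB⟩ := hAB
  obtain ⟨T₀, hT₀, hB_half, hAB₀, hAB_small⟩ :=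
    exists_gt_forall_le_and_setIntegral_Ioi_le (T := T) hB0 one_half_pos hAB
      (by norm_num : (0 : ℝ) < 1 / 4)
  refine ⟨8 * Real.exp (C * (T₀ + 1 - T)), fun ψ hψ => ?_⟩
  have htail := (hψ.mono hT₀.le).norm_le_eight_mul_and_exists_tendsto hA
    (fun t ht => hAC t (hT₀.trans ht)) (fun s hs t ht => hBeq s (hT₀.trans hs) t (hT₀.trans ht))
    hB_half hB0 hAB₀ hAB_small
  refine ⟨fun s t hs hst => ?_, htail.2⟩
  exact hψ.norm_le_mul_exp_of_forall_ge hAC (by linarith) (by norm_num)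
    (fun s t hs hst => htail.1 s t (by linarith) hst) hs hst

end Operators

section Matrices

variable {n : ℕ}

theorem euclNorm_eq_norm_toLp (v : Fin n → ℝ) : euclNorm v = ‖WithLp.toLp 2 v‖ := by
  simp [EuclideanSpace.norm_eq, euclNorm]

theorem matNorm_eq_norm_toEuclideanCLM (M : Matrix (Fin n) (Fin n) ℝ) :
    matNorm M = ‖Matrix.toEuclideanCLM (𝕜 := ℝ) M‖ := by
  rw [← ContinuousLinearMap.sSup_unitClosedBall_eq_norm, matNorm]
  congr 1
  ext c
  simp only [mem_ofPred_eq, mem_image, Metric.mem_closedBall, dist_zero_right,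
    euclNorm_eq_norm_toLp]
  constructor
  · rintro ⟨v, hv, rfl⟩
    exact ⟨WithLp.toLp 2 v, hv, rfl⟩
  · rintro ⟨x, hx, rfl⟩
    exact ⟨WithLp.ofLp x, hx, rfl⟩

theorem Matrix.toEuclideanCLM_eq_sum (M : Matrix (Fin n) (Fin n) ℝ) :
    Matrix.toEuclideanCLM (𝕜 := ℝ) M =
      ∑ i, ∑ j, M i j • Matrix.toEuclideanCLM (𝕜 := ℝ) (Matrix.single i j 1) := by
  conv_lhs => rw [M.matrix_eq_sum_single]
  simp only [map_sum, ← map_smul, Matrix.smul_single, smul_eq_mul, mul_one]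

theorem IsLinSol.isIntegralSolution {T : ℝ} {M : ℝ → Matrix (Fin n) (Fin n) ℝ}
    {φ : ℝ → Fin n → ℝ} (hφ : IsLinSol n T M φ) :
    IsIntegralSolution (fun t => Matrix.toEuclideanCLM (𝕜 := ℝ) (M t)) T
      (fun t => WithLp.toLp 2 (φ t)) := by
  refine ⟨(EuclideanSpace.equiv (Fin n) ℝ).symm.continuous.comp_continuousOn hφ.1,
    fun s hs t ht => ?_⟩
  have h := congr((EuclideanSpace.equiv (Fin n) ℝ).symm $(hφ.2 s hs t ht))
  rwa [map_sub, ← ContinuousLinearEquiv.intervalIntegral_comp_comm] at h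

theorem unifStable_of_euclNorm_le_mul {T : ℝ} {M : ℝ → Matrix (Fin n) (Fin n) ℝ} {K : ℝ}
    (hK : ∀ φ, IsLinSol n T M φ → ∀ s t, T < s → s ≤ t → euclNorm (φ t) ≤ K * euclNorm (φ s)) :
    UnifStable n T M := by
  intro ε hε
  refine ⟨ε / (|K| + 1), by positivity, fun φ hφ s hs hδ t hst => ?_⟩
  calc euclNorm (φ t) ≤ K * euclNorm (φ s) := hK φ hφ s t hs hst
    _ ≤ (|K| + 1) * euclNorm (φ s) :=
        mul_le_mul_of_nonneg_right (by linarith [le_abs_self K]) (Real.sqrt_nonneg _)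
    _ < (|K| + 1) * (ε / (|K| + 1)) := by gcongr
    _ = ε := by field_simp

variable {R : ℝ → Matrix (Fin n) (Fin n) ℝ}

theorem aestronglyMeasurable_toEuclideanCLM (hR : ∀ i j, Measurable fun t => R t i j) :
    AEStronglyMeasurable (fun t => Matrix.toEuclideanCLM (𝕜 := ℝ) (R t)) volume := by
  simp only [Matrix.toEuclideanCLM_eq_sum (R _)]
  exact Finset.aestronglyMeasurable_fun_sum _ fun i _ => Finset.aestronglyMeasurable_fun_sum _
    fun j _ => (hR i j).aestronglyMeasurable.smul aestronglyMeasurable_const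

theorem exists_norm_toEuclideanCLM_le {s : Set ℝ} (hR : ∃ C, ∀ t ∈ s, ∀ i j, |R t i j| ≤ C) :
    ∃ C : ℝ≥0, ∀ t ∈ s, ‖Matrix.toEuclideanCLM (𝕜 := ℝ) (R t)‖ ≤ C := by
  obtain ⟨C, hC⟩ := hR
  set E := fun i j : Fin n => Matrix.toEuclideanCLM (𝕜 := ℝ) (Matrix.single i j (1 : ℝ))
  refine ⟨(C * ∑ i, ∑ j, ‖E i j‖).toNNReal, fun t ht => ?_⟩
  rw [Matrix.toEuclideanCLM_eq_sum]
  calc ‖∑ i, ∑ j, R t i j • E i j‖ ≤ ∑ i, ∑ j, ‖R t i j • E i j‖ :=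
        (norm_sum_le _ _).trans (Finset.sum_le_sum fun i _ => norm_sum_le _ _)
    _ ≤ ∑ i, ∑ j, C * ‖E i j‖ := by
        gcongr with i _ j _
        rw [norm_smul, Real.norm_eq_abs]
        exact mul_le_mul_of_nonneg_right (hC t ht i j) (norm_nonneg _)
    _ ≤ (C * ∑ i, ∑ j, ‖E i j‖).toNNReal := by
        simp only [Finset.mul_sum]; exact Real.le_coe_toNNReal _

theorem tendsto_integral_toEuclideanCLM {T : ℝ} (hR_meas : ∀ i j, Measurable fun t => R t i j)
    (hR_bdd : ∃ C, ∀ t ∈ Ioi T, ∀ i j, |R t i j| ≤ C) {S : ℝ → Matrix (Fin n) (Fin n) ℝ}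
    {t : ℝ} (ht : t ∈ Ioi T)
    (hS : ∀ i j, Tendsto (fun u => ∫ τ in t..u, R τ i j) atTop (𝓝 (S t i j))) :
    Tendsto (fun u => ∫ τ in t..u, Matrix.toEuclideanCLM (𝕜 := ℝ) (R τ)) atTop
      (𝓝 (Matrix.toEuclideanCLM (𝕜 := ℝ) (S t))) := by
  obtain ⟨C, hC⟩ := hR_bdd
  set E := fun i j : Fin n => Matrix.toEuclideanCLM (𝕜 := ℝ) (Matrix.single i j (1 : ℝ))
  rw [Matrix.toEuclideanCLM_eq_sum]
  refine (tendsto_finsetSum _ fun i _ => tendsto_finsetSum _ fun j _ =>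
    (hS i j).smul_const (E i j)).congr' ?_
  filter_upwards [eventually_gt_atTop T] with u hu
  have hint : ∀ i j, IntervalIntegrable (fun τ => R τ i j) volume t u := fun i j =>
    intervalIntegrable_of_norm_le (hR_meas i j).aestronglyMeasurable.restrict fun τ hτ =>
      hC τ (ordConnected_Ioi.uIcc_subset ht hu (uIoc_subset_uIcc hτ)) i j
  have hrow : ∀ i, IntervalIntegrable (fun τ => ∑ j, R τ i j • E i j) volume t u := fun i => by
    simpa only [Finset.sum_fn] using
      IntervalIntegrable.sum Finset.univ fun j _ => (hint i j).smul_const (E i j)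
  simp only [Matrix.toEuclideanCLM_eq_sum (R _)]
  rw [intervalIntegral.integral_finsetSum fun i _ => hrow i]
  refine Finset.sum_congr rfl fun i _ => ?_
  rw [intervalIntegral.integral_finsetSum fun j _ => (hint i j).smul_const _]
  simp only [intervalIntegral.integral_smul_const]

end Matrices

/-- **Dynamical-systems content of Corollary 2.** Suppose `R̃ : (T,∞) → ℝ^{n×n}` is bounded
measurable, the improper integral `S(t) = ∫_t^∞ R̃(τ) dτ` converges (perhaps not absolutely)
for each `t > T` with `S(t) → 0` as `t → ∞`, and `R̃ S ∈ L¹(T′,∞)` for `T′` large. Then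
`dφ/dt + R̃(t)φ = 0` is uniformly stable and every solution is asymptotically constant. -/
theorem unifStable_and_asympConst_of_improper_integral
    (n : ℕ) (T : ℝ)
    (Rt : ℝ → Matrix (Fin n) (Fin n) ℝ)
    (hRt_meas : ∀ i j, Measurable fun t => Rt t i j)
    (hRt_bdd : ∃ C : ℝ, ∀ t ∈ Ioi T, ∀ i j, |Rt t i j| ≤ C)
    (S : ℝ → Matrix (Fin n) (Fin n) ℝ)
    (hS : ∀ t ∈ Ioi T, ∀ i j,
      Tendsto (fun u => ∫ τ in t..u, Rt τ i j) atTop (𝓝 (S t i j)))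
    (hS0 : Tendsto (fun t => matNorm (S t)) atTop (𝓝 0))
    (hL1 : ∃ T' ≥ T, IntegrableOn (fun t => matNorm (Rt t * S t)) (Ioi T')) :
    UnifStable n T Rt ∧
      ∀ φ : ℝ → Fin n → ℝ, IsLinSol n T Rt φ →
        ∃ φinf : Fin n → ℝ, Tendsto φ atTop (𝓝 φinf) := by
  obtain ⟨C, hC⟩ := exists_norm_toEuclideanCLM_le hRt_bdd
  obtain ⟨T', -, hT'⟩ := hL1
  obtain ⟨K, hK⟩ := exists_norm_le_mul_and_tendsto_of_tendsto_integral
    (B := fun t => Matrix.toEuclideanCLM (𝕜 := ℝ) (S t))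
    (aestronglyMeasurable_toEuclideanCLM hRt_meas) hC
    (fun t ht => tendsto_integral_toEuclideanCLM hRt_meas hRt_bdd ht (hS t ht))
    (by simpa only [matNorm_eq_norm_toEuclideanCLM] using hS0)
    ⟨T', by simpa only [matNorm_eq_norm_toEuclideanCLM, map_mul] using hT'⟩
  refine ⟨unifStable_of_euclNorm_le_mul (K := K) fun φ hφ s t hs hst => ?_, fun φ hφ => ?_⟩
  · simpa only [euclNorm_eq_norm_toLp] using (hK _ hφ.isIntegralSolution).1 s t hs hst
  · obtain ⟨L, hL⟩ := (hK _ hφ.isIntegralSolution).2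
    exact ⟨WithLp.ofLp L, ((EuclideanSpace.equiv (Fin n) ℝ).continuous.tendsto L).comp hL⟩
end
end
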